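/- arXiv:1603.02146 — 5 statements merged into one kernel-verified Lean document; each statement's English description precedes it below -/
import Mathlib

section
/- Let δ: A ⥤ B, α: A ⥤ C, β: B ⥤ D, γ: C ⥤ D be a strictly commutative square of categories. If α is an iso-fibration, then the square is Cartesian if and only if the induced functor A ⥤ B ×_D C is fully faithful and for all objects b of B and c of C with β(b) = γ(c) there exist an object a of A with α(a) = c and an isomorphism κ: δ(a) ≅ b satisfying β(κ) = 𝟙_{β(b)}. -/
open CategoryTheory

universe v₁ v₂ v₃ v₄ u₁ u₂ u₃ u₄

namespace PaperSquare

variable {A : Type u₁} {B : Type u₂} {C : Type u₃} {D : Type u₄}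
variable [Category.{v₁} A] [Category.{v₂} B] [Category.{v₃} C] [Category.{v₄} D]

/-- The strict fiber product `B ×_D C` of two functors `β : B ⥤ D` and `γ : C ⥤ D`:
objects are pairs `(b, c)` with `β(b) = γ(c)`, morphisms are pairs `(f, g)` with
`β(f) = γ(g)` (up to the identifications of the objects). -/
structure StrictPullback (β : B ⥤ D) (γ : C ⥤ D) : Type max u₂ u₃ where
  left : B
  right : C
  eq : β.obj left = γ.obj right

namespace StrictPullback

variable {β : B ⥤ D} {γ : C ⥤ D}

/-- Morphisms in the strict fiber product. -/
@[ext]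
structure Hom (x y : StrictPullback β γ) : Type max v₂ v₃ where
  left : x.left ⟶ y.left
  right : x.right ⟶ y.right
  w : β.map left = eqToHom x.eq ≫ γ.map right ≫ eqToHom y.eq.symm

instance : Category (StrictPullback β γ) where
  Hom := Hom
  id x := ⟨𝟙 _, 𝟙 _, by simp⟩
  comp f g := ⟨f.left ≫ g.left, f.right ≫ g.right, by
    rw [Functor.map_comp, Functor.map_comp, f.w, g.w]; simp⟩
  id_comp f := by apply Hom.ext <;> simp
  comp_id f := by apply Hom.ext <;> simp
  assoc f g h := by apply Hom.ext <;> simp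

@[simp] lemma id_left' (x : StrictPullback β γ) : (𝟙 x : Hom x x).left = 𝟙 x.left := rfl
@[simp] lemma id_right' (x : StrictPullback β γ) : (𝟙 x : Hom x x).right = 𝟙 x.right := rfl
@[simp] lemma comp_left' {x y z : StrictPullback β γ} (f : x ⟶ y) (g : y ⟶ z) :
    (f ≫ g).left = Hom.left f ≫ Hom.left g := rfl
@[simp] lemma comp_right' {x y z : StrictPullback β γ} (f : x ⟶ y) (g : y ⟶ z) :
    (f ≫ g).right = Hom.right f ≫ Hom.right g := rfl

end StrictPullback

/-- The functor `A ⥤ B ×_D C` induced by a strictly commutative square. -/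
def toPullback (δ : A ⥤ B) (α : A ⥤ C) (β : B ⥤ D) (γ : C ⥤ D)
    (hsq : δ ⋙ β = α ⋙ γ) : A ⥤ StrictPullback β γ where
  obj a := ⟨δ.obj a, α.obj a, Functor.congr_obj hsq a⟩
  map f := ⟨δ.map f, α.map f, Functor.congr_hom hsq f⟩
  map_id a := by apply StrictPullback.Hom.ext <;> simp
  map_comp f g := by apply StrictPullback.Hom.ext <;> simp

/-- The square is Cartesian if the induced functor `A ⥤ B ×_D C` is an equivalence. -/
def IsCartesianSq (δ : A ⥤ B) (α : A ⥤ C) (β : B ⥤ D) (γ : C ⥤ D)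
    (hsq : δ ⋙ β = α ⋙ γ) : Prop :=
  (toPullback δ α β γ hsq).IsEquivalence

/-- The full subcategory of the comma category `(β ↓ γ)` spanned by the objects
`(b, c, ν : β(b) → γ(c))` in which `ν` is an isomorphism. -/
def IsoComma (β : B ⥤ D) (γ : C ⥤ D) :=
  ObjectProperty.FullSubcategory (fun x : Comma β γ => IsIso x.hom)

instance (β : B ⥤ D) (γ : C ⥤ D) : Category (IsoComma β γ) :=
  ObjectProperty.FullSubcategory.category _

/-- The functor `A ⥤ (β ↓ γ)^≅` induced by a strictly commutative square. -/
def toIsoComma (δ : A ⥤ B) (α : A ⥤ C) (β : B ⥤ D) (γ : C ⥤ D)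
    (hsq : δ ⋙ β = α ⋙ γ) : A ⥤ IsoComma β γ where
  obj a := ⟨{ left := δ.obj a, right := α.obj a,
              hom := eqToHom (Functor.congr_obj hsq a) }, inferInstance⟩
  map {a a'} f := ObjectProperty.homMk
    { left := δ.map f
      right := α.map f
      w := by
        have h := Functor.congr_hom hsq f
        simp only [Functor.comp_map] at h
        simp [h] }

/-- The square is 2-Cartesian if the induced functor to the iso-comma category is an
equivalence. -/
def Is2CartesianSq (δ : A ⥤ B) (α : A ⥤ C) (β : B ⥤ D) (γ : C ⥤ D)
    (hsq : δ ⋙ β = α ⋙ γ) : Prop :=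
  (toIsoComma δ α β γ hsq).IsEquivalence

/-- A functor `β : B ⥤ D` is an iso-fibration if every isomorphism `β(b) ≅ d` lifts to an
isomorphism `b ≅ b'` with `β(b') = d` mapping to it strictly. -/
def IsIsoFibration (β : B ⥤ D) : Prop :=
  ∀ (b : B) (d : D) (ψ : β.obj b ≅ d), ∃ (b' : B) (e : β.obj b' = d) (φ : b ≅ b'),
    β.map φ.hom = ψ.hom ≫ eqToHom e.symm

/-!
Full faithfulness appears on both sides, so the content is essential surjectivity of
`A ⥤ B ×_D C`. An isomorphism `(δ a, α a) ≅ (b, c)` in the strict pullback need not have an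
identity as second component, but lifting that component along the iso-fibration `α` replaces
`a` by some `a'` with `α a' = c` for which it does; the first component `κ : δ a' ≅ b` then
satisfies `β κ = 𝟙` because the components of a morphism agree in `D`.
-/

namespace StrictPullback

variable {β : B ⥤ D} {γ : C ⥤ D}

def leftIso {x y : StrictPullback β γ} (e : x ≅ y) : x.left ≅ y.left where
  hom := e.hom.left
  inv := e.inv.left
  hom_inv_id := by rw [← comp_left', e.hom_inv_id, id_left']
  inv_hom_id := by rw [← comp_left', e.inv_hom_id, id_left']

def rightIso {x y : StrictPullback β γ} (e : x ≅ y) : x.right ≅ y.right where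
  hom := e.hom.right
  inv := e.inv.right
  hom_inv_id := by rw [← comp_right', e.hom_inv_id, id_right']
  inv_hom_id := by rw [← comp_right', e.inv_hom_id, id_right']

def isoMk {x y : StrictPullback β γ} (l : x.left ≅ y.left) (r : x.right ≅ y.right)
    (w : β.map l.hom = eqToHom x.eq ≫ γ.map r.hom ≫ eqToHom y.eq.symm) : x ≅ y where
  hom := ⟨l.hom, r.hom, w⟩
  inv := ⟨l.inv, r.inv, by
    rw [← cancel_epi (β.map l.hom), ← β.map_comp, w]
    simp [← γ.map_comp_assoc]⟩
  hom_inv_id := by apply Hom.ext <;> simp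
  inv_hom_id := by apply Hom.ext <;> simp

def isoMkOfRightEq {x y : StrictPullback β γ} (l : x.left ≅ y.left) (h : x.right = y.right)
    (hl : β.map l.hom = eqToHom (x.eq.trans ((congrArg γ.obj h).trans y.eq.symm))) : x ≅ y :=
  isoMk l (eqToIso h) (by rw [hl, eqToIso.hom, eqToHom_map]; simp)

lemma map_left_eq_eqToHom {x y : StrictPullback β γ} (f : x ⟶ y) {h : x.right = y.right}
    (hf : f.right = eqToHom h) :
    β.map f.left = eqToHom (x.eq.trans ((congrArg γ.obj h).trans y.eq.symm)) := by
  rw [f.w, hf, eqToHom_map]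
  simp

end StrictPullback

open StrictPullback

variable (δ : A ⥤ B) (α : A ⥤ C) (β : B ⥤ D) (γ : C ⥤ D) (hsq : δ ⋙ β = α ⋙ γ)

lemma exists_iso_toPullback_right_eq_eqToHom (hα : IsIsoFibration α) {a : A}
    {x : StrictPullback β γ} (e : (toPullback δ α β γ hsq).obj a ≅ x) :
    ∃ (a' : A) (h : α.obj a' = x.right) (e' : (toPullback δ α β γ hsq).obj a' ≅ x),
      e'.hom.right = eqToHom h := by
  let ψ : α.obj a ≅ x.right := rightIso e
  obtain ⟨a', h, φ, hφ⟩ := hα a x.right ψ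
  have hφinv : α.map φ.inv = eqToHom h ≫ ψ.inv :=
    congrArg Iso.inv (Iso.ext hφ : α.mapIso φ = ψ ≪≫ eqToIso h.symm)
  refine ⟨a', h, ((toPullback δ α β γ hsq).mapIso φ).symm ≪≫ e, ?_⟩
  change α.map φ.inv ≫ ψ.hom = _
  rw [hφinv, Category.assoc, ψ.inv_hom_id, Category.comp_id]

lemma essSurj_toPullback_iff_of_isIsoFibration (hα : IsIsoFibration α) :
    (toPullback δ α β γ hsq).EssSurj ↔
      ∀ (b : B) (c : C), β.obj b = γ.obj c →
        ∃ (a : A) (_ : α.obj a = c) (κ : δ.obj a ≅ b)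
          (e : β.obj (δ.obj a) = β.obj b), β.map κ.hom = eqToHom e := by
  constructor
  · intro _ b c h
    obtain ⟨a, ha, e, he⟩ := exists_iso_toPullback_right_eq_eqToHom δ α β γ hsq hα
      ((toPullback δ α β γ hsq).objObjPreimageIso ⟨b, c, h⟩)
    exact ⟨a, ha, leftIso e, _, map_left_eq_eqToHom e.hom he⟩
  · refine fun hlift => ⟨fun ⟨b, c, h⟩ => ?_⟩
    obtain ⟨a, ha, κ, _, hκ⟩ := hlift b c h
    exact ⟨a, ⟨isoMkOfRightEq κ ha hκ⟩⟩

/-- If `α` is an iso-fibration, then the square is Cartesian if and only if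
the induced functor `A ⥤ B ×_D C` is fully faithful and for all objects `b` of `B` and `c` of
`C` with `β(b) = γ(c)` there exist an object `a` of `A` with `α(a) = c` and an isomorphism
`κ : δ(a) ≅ b` with `β(κ) = 𝟙` (up to the identification of the objects). -/
theorem isCartesianSq_iff_of_isIsoFibration
    (δ : A ⥤ B) (α : A ⥤ C) (β : B ⥤ D) (γ : C ⥤ D) (hsq : δ ⋙ β = α ⋙ γ)
    (hα : IsIsoFibration α) :
    IsCartesianSq δ α β γ hsq ↔
      ((toPullback δ α β γ hsq).Full ∧ (toPullback δ α β γ hsq).Faithful) ∧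
      ∀ (b : B) (c : C) (h : β.obj b = γ.obj c),
        ∃ (a : A) (ha : α.obj a = c) (κ : δ.obj a ≅ b)
          (e : β.obj (δ.obj a) = β.obj b), β.map κ.hom = eqToHom e := by
  rw [IsCartesianSq, ← essSurj_toPullback_iff_of_isIsoFibration δ α β γ hsq hα]
  exact ⟨fun _ => ⟨⟨inferInstance, inferInstance⟩, inferInstance⟩,
    fun ⟨⟨_, _⟩, _⟩ => { }⟩

end PaperSquare
end

section
/- Let δ: A ⥤ B, α: A ⥤ C, β: B ⥤ D, γ: C ⥤ D be a strictly commutative square of categories. Assume α and β are Grothendieck fibrations and that δ maps morphisms that are strongly Cartesian with respect to α to morphisms that are strongly Cartesian with respect to β. Then the induced functor A ⥤ B ×_D C is fully faithful if and only if for every object c of C and all objects a, a' of A with α(a) = α(a') = c, the functor δ induces a bijection from the set of morphisms a → a' lying over 𝟙_c to the set of morphisms δ(a) → δ(a') lying over 𝟙_{γ(c)}. -/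
open CategoryTheory

universe v₁ v₂ v₃ v₄ u₁ u₂ u₃ u₄

namespace PaperSquare

variable {A : Type u₁} {B : Type u₂} {C : Type u₃} {D : Type u₄}
variable [Category.{v₁} A] [Category.{v₂} B] [Category.{v₃} C] [Category.{v₄} D]

/-- A morphism `ξ : x ⟶ y` is strongly coCartesian with respect to `p : E ⥤ S` if for every
morphism `h : x ⟶ z` and every factorization `p(h) = v ∘ p(ξ)` there is a unique morphism
`w : y ⟶ z` with `p(w) = v` and `w ∘ ξ = h`. -/
def IsStronglyCocartesian {E : Type u₁} {S : Type u₂} [Category.{v₁} E] [Category.{v₂} S]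
    (p : E ⥤ S) {x y : E} (ξ : x ⟶ y) : Prop :=
  ∀ (z : E) (h : x ⟶ z) (v : p.obj y ⟶ p.obj z), p.map h = p.map ξ ≫ v →
    ∃! w : y ⟶ z, p.map w = v ∧ ξ ≫ w = h

/-- A morphism `ξ : x ⟶ y` is strongly Cartesian with respect to `p : E ⥤ S` if for every
morphism `h : z ⟶ y` and every factorization `p(h) = p(ξ) ∘ v` there is a unique morphism
`w : z ⟶ x` with `p(w) = v` and `ξ ∘ w = h`. -/
def IsStronglyCartesian {E : Type u₁} {S : Type u₂} [Category.{v₁} E] [Category.{v₂} S]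
    (p : E ⥤ S) {x y : E} (ξ : x ⟶ y) : Prop :=
  ∀ (z : E) (h : z ⟶ y) (v : p.obj z ⟶ p.obj x), p.map h = v ≫ p.map ξ →
    ∃! w : z ⟶ x, p.map w = v ∧ w ≫ ξ = h

/-- `p : E ⥤ S` is a Grothendieck opfibration if every morphism `p(x) ⟶ s` admits a strongly
coCartesian lift starting at `x`. -/
def IsGrothendieckOpfibration {E : Type u₁} {S : Type u₂} [Category.{v₁} E] [Category.{v₂} S]
    (p : E ⥤ S) : Prop :=
  ∀ (x : E) (s : S) (f : p.obj x ⟶ s), ∃ (y : E) (ξ : x ⟶ y) (hy : p.obj y = s),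
    p.map ξ = f ≫ eqToHom hy.symm ∧ IsStronglyCocartesian p ξ

/-- `p : E ⥤ S` is a Grothendieck fibration if every morphism `s ⟶ p(y)` admits a strongly
Cartesian lift ending at `y`. -/
def IsGrothendieckFibration {E : Type u₁} {S : Type u₂} [Category.{v₁} E] [Category.{v₂} S]
    (p : E ⥤ S) : Prop :=
  ∀ (y : E) (s : S) (f : s ⟶ p.obj y), ∃ (x : E) (ξ : x ⟶ y) (hx : p.obj x = s),
    p.map ξ = eqToHom hx ≫ f ∧ IsStronglyCartesian p ξ

section
variable {E : Type u₁} {S : Type u₂} [Category.{v₁} E] [Category.{v₂} S]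

/-- The set of morphisms `x ⟶ y` of `E` lying over the identity (`x` and `y` both lying over
a common object of `S`). -/
def HomOverId (p : E ⥤ S) (x y : E) : Type v₁ :=
  {f : x ⟶ y // ∃ e : p.obj x = p.obj y, p.map f = eqToHom e}

end

variable {δ : A ⥤ B} {α : A ⥤ C} {β : B ⥤ D} {γ : C ⥤ D}

/-- The map induced by `δ` on morphisms lying over identities. -/
def deltaHomOverId (hsq : δ ⋙ β = α ⋙ γ) {a a' : A} (f : HomOverId α a a') :
    HomOverId β (δ.obj a) (δ.obj a') := by
  refine ⟨δ.map f.1, ?_⟩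
  obtain ⟨e, he⟩ := f.2
  refine ⟨?_, ?_⟩
  · have h1 : β.obj (δ.obj a) = γ.obj (α.obj a) := Functor.congr_obj hsq a
    have h2 : β.obj (δ.obj a') = γ.obj (α.obj a') := Functor.congr_obj hsq a'
    rw [h1, h2, e]
  · have h := Functor.congr_hom hsq f.1
    simp only [Functor.comp_map] at h
    rw [h, he]
    simp [eqToHom_map]

/-!
In the fibration `α`, a morphism `a ⟶ a'` of `A` factors as a morphism over an identity followed
by a strongly Cartesian lift `ξ` of its image in `C`. Since `δ ξ` is strongly Cartesian for `β`,
a morphism `(g, h)` of `B ×_D C` out of the image of `a` factors in the same way, uniquely, through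
the image of `ξ`. This reduces fullness and faithfulness of `A ⥤ B ×_D C` to surjectivity and
injectivity of `δ` on morphisms over identities. Conversely, a morphism over an identity in `B`,
paired with the identity-like `eqToHom` in `C`, is a morphism of `B ×_D C`.
-/

namespace IsStronglyCartesian

variable {E : Type u₁} {S : Type u₂} [Category.{v₁} E] [Category.{v₂} S] {p : E ⥤ S}
variable {x y z : E} {ξ : x ⟶ y}

lemma exists_homOverId_comp_eq (hξ : IsStronglyCartesian p ξ) (h : z ⟶ y)
    (e : p.obj z = p.obj x) (hh : p.map h = eqToHom e ≫ p.map ξ) :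
    ∃ w : HomOverId p z x, w.1 ≫ ξ = h := by
  obtain ⟨w, ⟨hw, hwξ⟩, -⟩ := hξ z h (eqToHom e) hh
  exact ⟨⟨w, e, hw⟩, hwξ⟩

lemma homOverId_ext (hξ : IsStronglyCartesian p ξ) {w w' : HomOverId p z x}
    (h : w.1 ≫ ξ = w'.1 ≫ ξ) : w = w' := by
  obtain ⟨w, e, hw⟩ := w
  obtain ⟨w', e', hw'⟩ := w'
  have hmap : p.map (w ≫ ξ) = eqToHom e ≫ p.map ξ := by rw [Functor.map_comp, hw]
  exact Subtype.ext ((hξ z _ _ hmap).unique ⟨hw, rfl⟩ ⟨hw', h.symm⟩)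

end IsStronglyCartesian

lemma obj_obj_eq_of_comp_eq (hsq : δ ⋙ β = α ⋙ γ) (a : A) :
    β.obj (δ.obj a) = γ.obj (α.obj a) :=
  Functor.congr_obj hsq a

lemma map_map_eq_of_comp_eq (hsq : δ ⋙ β = α ⋙ γ) {a a' : A} (f : a ⟶ a') :
    β.map (δ.map f) = eqToHom (obj_obj_eq_of_comp_eq hsq a) ≫ γ.map (α.map f) ≫
      eqToHom (obj_obj_eq_of_comp_eq hsq a').symm :=
  Functor.congr_hom hsq f

lemma deltaHomOverId_val (hsq : δ ⋙ β = α ⋙ γ) {a a' : A} (f : HomOverId α a a') :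
    (deltaHomOverId hsq f).1 = δ.map f.1 := rfl

lemma injective_deltaHomOverId_of_faithful (hsq : δ ⋙ β = α ⋙ γ)
    [(toPullback δ α β γ hsq).Faithful] (a a' : A) :
    Function.Injective (deltaHomOverId hsq (a := a) (a' := a')) := by
  rintro ⟨f, e, hf⟩ ⟨f', e', hf'⟩ h
  refine Subtype.ext ((toPullback δ α β γ hsq).map_injective (StrictPullback.Hom.ext ?_ ?_))
  · exact congrArg Subtype.val h
  · exact hf.trans hf'.symm

lemma surjective_deltaHomOverId_of_full (hsq : δ ⋙ β = α ⋙ γ)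
    [(toPullback δ α β γ hsq).Full] {a a' : A} (e : α.obj a = α.obj a') :
    Function.Surjective (deltaHomOverId hsq (a := a) (a' := a')) := by
  rintro ⟨g, eg, hg⟩
  let φ : (toPullback δ α β γ hsq).obj a ⟶ (toPullback δ α β γ hsq).obj a' :=
    ⟨g, eqToHom e, by
      change β.map g = eqToHom (obj_obj_eq_of_comp_eq hsq a) ≫ γ.map (eqToHom e) ≫
        eqToHom (obj_obj_eq_of_comp_eq hsq a').symm
      simp only [hg, eqToHom_map, eqToHom_trans]⟩
  obtain ⟨f, hf⟩ := (toPullback δ α β γ hsq).map_surjective φ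
  exact ⟨⟨f, e, congrArg StrictPullback.Hom.right hf⟩,
    Subtype.ext (congrArg StrictPullback.Hom.left hf)⟩

lemma faithful_toPullback (hsq : δ ⋙ β = α ⋙ γ) (hα : IsGrothendieckFibration α)
    (hδ : ∀ {x y : A} (f : x ⟶ y), IsStronglyCartesian α f → IsStronglyCartesian β (δ.map f))
    (hinj : ∀ a a' : A, α.obj a = α.obj a' →
      Function.Injective (deltaHomOverId hsq (a := a) (a' := a'))) :
    (toPullback δ α β γ hsq).Faithful where
  map_injective {a a'} f f' h := by
    have hδf : δ.map f = δ.map f' := congrArg StrictPullback.Hom.left h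
    have hαf : α.map f = α.map f' := congrArg StrictPullback.Hom.right h
    obtain ⟨x, ξ, hx, hξ, hcart⟩ := hα a' (α.obj a) (α.map f)
    obtain ⟨w, hw⟩ := hcart.exists_homOverId_comp_eq f hx.symm (by simp [hξ])
    obtain ⟨w', hw'⟩ := hcart.exists_homOverId_comp_eq f' hx.symm (by simp [hξ, hαf])
    have hδw : deltaHomOverId hsq w = deltaHomOverId hsq w' :=
      (hδ ξ hcart).homOverId_ext (by
        simp only [deltaHomOverId_val, ← Functor.map_comp, hw, hw', hδf])
    rw [← hw, ← hw', hinj a x hx.symm hδw]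

lemma exists_map_eq_of_surjective_deltaHomOverId (hsq : δ ⋙ β = α ⋙ γ)
    (hα : IsGrothendieckFibration α)
    (hδ : ∀ {x y : A} (f : x ⟶ y), IsStronglyCartesian α f → IsStronglyCartesian β (δ.map f))
    (hsurj : ∀ a a' : A, α.obj a = α.obj a' →
      Function.Surjective (deltaHomOverId hsq (a := a) (a' := a')))
    {a a' : A} (g : δ.obj a ⟶ δ.obj a') (h : α.obj a ⟶ α.obj a')
    (hgh : β.map g = eqToHom (obj_obj_eq_of_comp_eq hsq a) ≫ γ.map h ≫
      eqToHom (obj_obj_eq_of_comp_eq hsq a').symm) :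
    ∃ f : a ⟶ a', δ.map f = g ∧ α.map f = h := by
  obtain ⟨x, ξ, hx, hξ, hcart⟩ := hα a' (α.obj a) h
  have e : β.obj (δ.obj a) = β.obj (δ.obj x) := by
    rw [obj_obj_eq_of_comp_eq hsq, obj_obj_eq_of_comp_eq hsq, hx]
  have hg : β.map g = eqToHom e ≫ β.map (δ.map ξ) := by
    rw [hgh, map_map_eq_of_comp_eq hsq ξ, hξ]
    simp [eqToHom_map]
  obtain ⟨w, hw⟩ := (hδ ξ hcart).exists_homOverId_comp_eq g e hg
  obtain ⟨⟨f, e', hf⟩, rfl⟩ := hsurj a x hx.symm w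
  refine ⟨f ≫ ξ, by rw [Functor.map_comp, ← hw]; rfl, ?_⟩
  simp [hf, hξ]

lemma full_toPullback (hsq : δ ⋙ β = α ⋙ γ) (hα : IsGrothendieckFibration α)
    (hδ : ∀ {x y : A} (f : x ⟶ y), IsStronglyCartesian α f → IsStronglyCartesian β (δ.map f))
    (hsurj : ∀ a a' : A, α.obj a = α.obj a' →
      Function.Surjective (deltaHomOverId hsq (a := a) (a' := a'))) :
    (toPullback δ α β γ hsq).Full where
  map_surjective φ :=
    have ⟨f, hδf, hαf⟩ :=
      exists_map_eq_of_surjective_deltaHomOverId hsq hα hδ hsurj φ.left φ.right φ.w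
    ⟨f, StrictPullback.Hom.ext hδf hαf⟩

theorem fullyFaithful_toPullback_iff_general
    (hsq : δ ⋙ β = α ⋙ γ)
    (hα : IsGrothendieckFibration α)
    (hδ : ∀ {x y : A} (f : x ⟶ y), IsStronglyCartesian α f → IsStronglyCartesian β (δ.map f)) :
    ((toPullback δ α β γ hsq).Full ∧ (toPullback δ α β γ hsq).Faithful) ↔
      ∀ (c : C) (a a' : A), α.obj a = c → α.obj a' = c →
        Function.Bijective (deltaHomOverId hsq (a := a) (a' := a')) := by
  constructor
  · rintro ⟨_, _⟩ c a a' rfl ha'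
    exact ⟨injective_deltaHomOverId_of_faithful hsq a a',
      surjective_deltaHomOverId_of_full hsq ha'.symm⟩
  · intro hbij
    exact ⟨full_toPullback hsq hα hδ fun a a' e ↦ (hbij _ a a' e rfl).2,
      faithful_toPullback hsq hα hδ fun a a' e ↦ (hbij _ a a' e rfl).1⟩

/-- If `α` and `β` are Grothendieck fibrations and `δ` maps strongly Cartesian
morphisms (w.r.t. `α`) to strongly Cartesian morphisms (w.r.t. `β`), then the induced functor
`A ⥤ B ×_D C` is fully faithful if and only if for every `c : C` and all `a, a'` in the fiber
of `α` over `c`, the functor `δ` induces a bijection on morphisms lying over identities. -/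
theorem fullyFaithful_toPullback_iff
    (hsq : δ ⋙ β = α ⋙ γ)
    (hα : IsGrothendieckFibration α) (hβ : IsGrothendieckFibration β)
    (hδ : ∀ {x y : A} (f : x ⟶ y), IsStronglyCartesian α f → IsStronglyCartesian β (δ.map f)) :
    ((toPullback δ α β γ hsq).Full ∧ (toPullback δ α β γ hsq).Faithful) ↔
      ∀ (c : C) (a a' : A), α.obj a = c → α.obj a' = c →
        Function.Bijective (deltaHomOverId hsq (a := a) (a' := a')) :=
  fullyFaithful_toPullback_iff_general hsq hα hδ

end PaperSquare
end

section
/- Let F, G: B ⥤ C be pseudofunctors between bicategories and let ξ: F ⟶ G be a strong natural transformation. Then there exist a strong natural transformation η: G ⟶ F and invertible modifications ξ ∘ η ≅ id_G and η ∘ ξ ≅ id_F if and only if for every object X of B the component ξ_X: F(X) → G(X) is an equivalence in C. -/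
/-!
Adjointifying the given 2-cells turns each component into an adjunction `v_X ⊣ ξ_X` with
invertible unit and counit. The inverse transformation has components `v_X`, and its naturality
2-cell at `f` is the mate of `ξ_f⁻¹` with respect to these adjunctions, invertible because all
the 2-cells it is pasted from are. Mates are compatible with whiskering and with vertical
pasting, so the axioms of `ξ` transport to those of the inverse; and the identities expressing
a 2-cell through the adjuncts of its mate are precisely the modification axioms for the units
and the counits.
-/

open CategoryTheory

open scoped Pseudofunctor.StrongTrans Oplax.OplaxTrans

universe w₁ w₂ v₁ v₂ u₁ u₂

namespace PaperBicat

variable {B : Type u₁} [Bicategory.{w₁, v₁} B] {C : Type u₂} [Bicategory.{w₂, v₂} C]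

def IsEquivalence1Cell {x y : C} (u : x ⟶ y) : Prop :=
  ∃ v : y ⟶ x, Nonempty (𝟙 x ≅ u ≫ v) ∧ Nonempty (v ≫ u ≅ 𝟙 y)

open Bicategory

section Mates

variable {a b c d : C} {g : a ⟶ c} {h : b ⟶ d} {l₁ : a ⟶ b} {r₁ : b ⟶ a} {l₂ : c ⟶ d}
  {r₂ : d ⟶ c} (adj₁ : l₁ ⊣ r₁) (adj₂ : l₂ ⊣ r₂)

lemma mateEquiv_symm_whiskerLeft_comp {g' : a ⟶ c} (φ : g' ⟶ g) (β : r₁ ≫ g ⟶ h ≫ r₂) :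
    (mateEquiv adj₁ adj₂).symm (r₁ ◁ φ ≫ β) = φ ▷ l₂ ≫ (mateEquiv adj₁ adj₂).symm β := by
  simp only [mateEquiv_symm_apply']
  calc _ = 𝟙 _ ⊗≫ (adj₁.unit ▷ g' ≫ (l₁ ≫ r₁) ◁ φ) ▷ l₂ ⊗≫ l₁ ◁ β ▷ l₂ ⊗≫
          l₁ ◁ h ◁ adj₂.counit ⊗≫ 𝟙 _ := by bicategory
    _ = _ := by rw [← whisker_exchange]; bicategory

lemma mateEquiv_symm_comp_whiskerRight {h' : b ⟶ d} (β : r₁ ≫ g ⟶ h ≫ r₂) (ψ : h ⟶ h') :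
    (mateEquiv adj₁ adj₂).symm (β ≫ ψ ▷ r₂) = (mateEquiv adj₁ adj₂).symm β ≫ l₁ ◁ ψ := by
  simp only [mateEquiv_symm_apply']
  calc _ = 𝟙 _ ⊗≫ adj₁.unit ▷ g ▷ l₂ ⊗≫ l₁ ◁ β ▷ l₂ ⊗≫
          l₁ ◁ (ψ ▷ (r₂ ≫ l₂) ≫ h' ◁ adj₂.counit) ⊗≫ 𝟙 _ := by bicategory
    _ = _ := by rw [← whisker_exchange]; bicategory

instance isIso_mateEquiv_symm [IsIso adj₁.unit] [IsIso adj₂.counit] (β : r₁ ≫ g ⟶ h ≫ r₂)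
    [IsIso β] : IsIso ((mateEquiv adj₁ adj₂).symm β) := by
  rw [Bicategory.mateEquiv_symm_apply, Adjunction.homEquiv₂_symm_apply,
    Adjunction.homEquiv₁_symm_apply]
  infer_instance

lemma homEquiv₂_mateEquiv_symm (β : r₁ ≫ g ⟶ h ≫ r₂) :
    adj₂.homEquiv₂ ((mateEquiv adj₁ adj₂).symm β) = adj₁.homEquiv₁.symm β ≫ (α_ _ _ _).inv := by
  rw [(mateEquiv_eq_iff adj₁ adj₂ _ β).mp (Equiv.apply_symm_apply _ _)]
  simp

lemma homEquiv₁_mateEquiv_symm (β : r₁ ≫ g ⟶ h ≫ r₂) :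
    adj₁.homEquiv₁ ((mateEquiv adj₁ adj₂).symm β) = (α_ _ _ _).inv ≫ adj₂.homEquiv₂.symm β := by
  simp only [mateEquiv_symm_apply', Adjunction.homEquiv₁_apply, Adjunction.homEquiv₂_symm_apply]
  calc _ = 𝟙 _ ⊗≫ r₁ ◁ adj₁.unit ▷ (g ≫ l₂) ⊗≫
          ((r₁ ≫ l₁) ◁ (β ▷ l₂ ⊗≫ h ◁ adj₂.counit) ≫ adj₁.counit ▷ (h ≫ 𝟙 d)) ⊗≫ 𝟙 _ := by
        bicategory
    _ = 𝟙 _ ⊗≫ rightZigzag adj₁.unit adj₁.counit ▷ (g ≫ l₂) ⊗≫ β ▷ l₂ ⊗≫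
          h ◁ adj₂.counit ⊗≫ 𝟙 _ := by
        rw [whisker_exchange]; bicategory
    _ = _ := by rw [adj₁.right_triangle]; bicategory

end Mates

lemma mateEquiv_symm_vcomp {a b c d e f : C} {g₁ : a ⟶ c} {g₂ : c ⟶ e} {h₁ : b ⟶ d}
    {h₂ : d ⟶ f} {l₁ : a ⟶ b} {r₁ : b ⟶ a} {l₂ : c ⟶ d} {r₂ : d ⟶ c} {l₃ : e ⟶ f}
    {r₃ : f ⟶ e} (adj₁ : l₁ ⊣ r₁) (adj₂ : l₂ ⊣ r₂) (adj₃ : l₃ ⊣ r₃)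
    (α : r₁ ≫ g₁ ⟶ h₁ ≫ r₂) (β : r₂ ≫ g₂ ⟶ h₂ ≫ r₃) :
    (mateEquiv adj₁ adj₃).symm (rightAdjointSquare.vcomp α β) =
      leftAdjointSquare.vcomp ((mateEquiv adj₁ adj₂).symm α) ((mateEquiv adj₂ adj₃).symm β) := by
  rw [Equiv.symm_apply_eq, Bicategory.mateEquiv_vcomp, Equiv.apply_symm_apply,
    Equiv.apply_symm_apply]

namespace StrongTrans

variable {F G : Pseudofunctor B C} (ξ : F ⟶ G)

lemma naturality_inv_naturality {X Y : B} {f g : X ⟶ Y} (β : f ⟶ g) :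
    ξ.app X ◁ G.map₂ β ≫ (ξ.naturality g).inv = (ξ.naturality f).inv ≫ F.map₂ β ▷ ξ.app Y := by
  rw [← cancel_mono (ξ.naturality g).hom]
  simp

variable {v : ∀ X, G.obj X ⟶ F.obj X} (adj : ∀ X, v X ⊣ ξ.app X)

noncomputable def invOfAdjunctions [∀ X, IsIso (adj X).unit] [∀ X, IsIso (adj X).counit] :
    G ⟶ F where
  app := v
  naturality {X Y} f := asIso ((mateEquiv (adj X) (adj Y)).symm (ξ.naturality f).inv)
  naturality_naturality {X Y f g} β := by
    simp only [asIso_hom]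
    rw [← mateEquiv_symm_whiskerLeft_comp, ← mateEquiv_symm_comp_whiskerRight,
      naturality_inv_naturality]
  naturality_id X := by
    have hξ : (ξ.naturality (𝟙 X)).inv ≫ (F.mapId X).hom ▷ ξ.app X =
        ξ.app X ◁ (G.mapId X).hom ≫ (ρ_ _).hom ≫ (λ_ _).inv := by
      simp [Pseudofunctor.StrongTrans.naturality_id_inv]
    simp only [asIso_hom]
    rw [← mateEquiv_symm_comp_whiskerRight, hξ, mateEquiv_symm_whiskerLeft_comp,
      (Equiv.symm_apply_eq _).mpr (mateEquiv_leftUnitor_hom_rightUnitor_inv (adj X)).symm]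
  naturality_comp {X Y Z} f g := by
    have hξ : (ξ.naturality (f ≫ g)).inv ≫ (F.mapComp f g).hom ▷ ξ.app Z =
        ξ.app X ◁ (G.mapComp f g).hom ≫
          rightAdjointSquare.vcomp (ξ.naturality f).inv (ξ.naturality g).inv := by
      simp [Pseudofunctor.StrongTrans.naturality_comp_inv, rightAdjointSquare.vcomp]
    simp only [asIso_hom]
    rw [← mateEquiv_symm_comp_whiskerRight, hξ, mateEquiv_symm_whiskerLeft_comp,
      mateEquiv_symm_vcomp _ (adj Y)]
    rfl

noncomputable def counitIso [∀ X, IsIso (adj X).unit] [∀ X, IsIso (adj X).counit] :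
    (show G.toOplax ⟶ G.toOplax from (invOfAdjunctions ξ adj ≫ ξ).toOplax.toOplax) ≅
      (show G.toOplax ⟶ G.toOplax from (𝟙 G : G ⟶ G).toOplax.toOplax) :=
  (Oplax.OplaxTrans.isoMk (fun X : B => show 𝟙 _ ≅ v X ≫ ξ.app X from asIso (adj X).unit)
    fun {X Y} f => by
    have key := homEquiv₂_mateEquiv_symm (adj X) (adj Y) (ξ.naturality f).inv
    simp only [Adjunction.homEquiv₂_apply, Adjunction.homEquiv₁_symm_apply] at key
    change G.map f ◁ (adj Y).unit ≫ (α_ _ _ _).inv ≫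
        (mateEquiv (adj X) (adj Y)).symm (ξ.naturality f).inv ▷ ξ.app Y ≫ (α_ _ _ _).hom ≫
          v X ◁ (ξ.naturality f).hom ≫ (α_ _ _ _).inv =
        ((ρ_ _).hom ≫ (λ_ _).inv) ≫ (adj X).unit ▷ G.map f
    rw [← cancel_epi (ρ_ _).inv]
    simp only [reassoc_of% key]
    simp).symm

noncomputable def unitIso [∀ X, IsIso (adj X).unit] [∀ X, IsIso (adj X).counit] :
    (show F.toOplax ⟶ F.toOplax from (ξ ≫ invOfAdjunctions ξ adj).toOplax.toOplax) ≅
      (show F.toOplax ⟶ F.toOplax from (𝟙 F : F ⟶ F).toOplax.toOplax) :=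
  Oplax.OplaxTrans.isoMk (fun X : B => show ξ.app X ≫ v X ≅ 𝟙 _ from asIso (adj X).counit)
    fun {X Y} f => by
    have key := homEquiv₁_mateEquiv_symm (adj X) (adj Y) (ξ.naturality f).inv
    simp only [Adjunction.homEquiv₁_apply, Adjunction.homEquiv₂_symm_apply] at key
    change F.map f ◁ (adj Y).counit ≫ (ρ_ _).hom ≫ (λ_ _).inv =
        ((α_ _ _ _).inv ≫ (ξ.naturality f).hom ▷ v Y ≫ (α_ _ _ _).hom ≫
          ξ.app X ◁ (mateEquiv (adj X) (adj Y)).symm (ξ.naturality f).inv ≫ (α_ _ _ _).inv) ≫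
          (adj X).counit ▷ F.map f
    rw [← cancel_mono (λ_ _).hom]
    simp only [Category.assoc, key]
    simp

end StrongTrans

lemma IsEquivalence1Cell.exists_adjunction {x y : C} {u : x ⟶ y} (h : IsEquivalence1Cell u) :
    ∃ (v : y ⟶ x) (adj : v ⊣ u), IsIso adj.unit ∧ IsIso adj.counit := by
  obtain ⟨v, ⟨unit⟩, ⟨counit⟩⟩ := h
  let e := Equivalence.mkOfAdjointifyCounit counit.symm unit.symm
  exact ⟨v, ⟨e.unit.hom, e.counit.hom, e.left_triangle_hom, e.right_triangle_hom⟩,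
    inferInstanceAs (IsIso e.unit.hom), inferInstanceAs (IsIso e.counit.hom)⟩

def Oplax.OplaxTrans.appIso {F G : OplaxFunctor B C} {η θ : F ⟶ G} (Γ : η ≅ θ) (X : B) :
    η.app X ≅ θ.app X where
  hom := Γ.hom.as.app X
  inv := Γ.inv.as.app X
  hom_inv_id := congrArg (fun m => m.as.app X) Γ.hom_inv_id
  inv_hom_id := congrArg (fun m => m.as.app X) Γ.inv_hom_id

/-- A strong natural transformation `ξ : F ⟶ G` between pseudofunctors admits
a strong natural transformation `η : G ⟶ F` together with invertible modifications
`ξ ∘ η ≅ id_G` and `η ∘ ξ ≅ id_F` if and only if every component `ξ_X` is an equivalence. -/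
theorem strongNatTrans_equivalence_iff_pointwise
    (F G : Pseudofunctor B C) (ξ : F ⟶ G) :
    (∃ η : G ⟶ F,
        Nonempty ((show G.toOplax ⟶ G.toOplax from (η ≫ ξ).toOplax.toOplax) ≅
          (show G.toOplax ⟶ G.toOplax from (𝟙 G : G ⟶ G).toOplax.toOplax)) ∧
        Nonempty ((show F.toOplax ⟶ F.toOplax from (ξ ≫ η).toOplax.toOplax) ≅
          (show F.toOplax ⟶ F.toOplax from (𝟙 F : F ⟶ F).toOplax.toOplax))) ↔
      ∀ X : B, IsEquivalence1Cell (ξ.app X) := by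
  constructor
  · rintro ⟨η, ⟨counit⟩, ⟨unit⟩⟩ X
    exact ⟨η.app X, ⟨(Oplax.OplaxTrans.appIso unit X).symm⟩,
      ⟨Oplax.OplaxTrans.appIso counit X⟩⟩
  · intro h
    choose v adj _ _ using fun X => (h X).exists_adjunction
    exact ⟨StrongTrans.invOfAdjunctions ξ adj, ⟨StrongTrans.counitIso ξ adj⟩,
      ⟨StrongTrans.unitIso ξ adj⟩⟩

end PaperBicat
end

section
/- Let α: I ⥤ J and β: J ⥤ K be functors between small categories. Let P be the strict fiber product over J of the codomain projection (α ↓ 𝟭_J) ⥤ J and the domain projection (β ↓ 𝟭_K) ⥤ J, so that the objects of P are tuples (i, j, f: α(i) → j, k, g: β(j) → k). Define Φ: P ⥤ (β ∘ α ↓ 𝟭_K) by (i, j, f, k, g) ↦ (i, k, g ∘ β(f)) and Ψ: (β ∘ α ↓ 𝟭_K) ⥤ P by (i, k, h) ↦ (i, α(i), 𝟙_{α(i)}, k, h). Then Φ ∘ Ψ = 𝟭, Ψ is left adjoint to Φ with identity unit, both Φ and Ψ commute strictly with the projections of both categories to I and to K, and every component of the counit Ψ ∘ Φ ⟹ 𝟭_P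 is mapped to an identity by the projections to I and to K. -/
/-!
`Ψ` sends `(i, k, h)` to the object of `P` with `j = α(i)` and `f = 𝟙`, so `ΦΨ` is the identity
because `β(𝟙) = 𝟙`. The counit at `(i, j, f, k, g)` is `(𝟙_i, f, 𝟙_k)`; since the unit and all other
components of the counit are identities, the triangle identities hold componentwise.
-/

open CategoryTheory

universe v₁ v₂ v₃ u₁ u₂ u₃

namespace PaperComma9

variable {I : Type u₁} {J : Type u₂} {K : Type u₃}
variable [Category.{v₁} I] [Category.{v₂} J] [Category.{v₃} K]

/-- The strict fiber product over `J` of the codomain projection `(α ↓ 𝟭_J) ⥤ J` and the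
domain projection `(β ↓ 𝟭_K) ⥤ J`; its objects are tuples `(i, j, f : α(i) → j, k, g : β(j) → k)`. -/
structure P (α : I ⥤ J) (β : J ⥤ K) : Type max u₁ u₂ u₃ v₂ v₃ where
  i : I
  j : J
  f : α.obj i ⟶ j
  k : K
  g : β.obj j ⟶ k

namespace P

variable {α : I ⥤ J} {β : J ⥤ K}

/-- Morphisms in `P`: pairs of morphisms in the two comma categories agreeing on `J`. -/
@[ext]
structure Hom (x y : P α β) : Type max v₁ v₂ v₃ where
  u : x.i ⟶ y.i
  v : x.j ⟶ y.j
  w : x.k ⟶ y.k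
  sq1 : α.map u ≫ y.f = x.f ≫ v
  sq2 : β.map v ≫ y.g = x.g ≫ w

instance : Category (P α β) where
  Hom := Hom
  id x := ⟨𝟙 _, 𝟙 _, 𝟙 _, by simp, by simp⟩
  comp m m' := ⟨m.u ≫ m'.u, m.v ≫ m'.v, m.w ≫ m'.w,
    by rw [Functor.map_comp, Category.assoc, m'.sq1, ← Category.assoc, m.sq1, Category.assoc],
    by rw [Functor.map_comp, Category.assoc, m'.sq2, ← Category.assoc, m.sq2, Category.assoc]⟩
  id_comp m := by apply Hom.ext <;> simp
  comp_id m := by apply Hom.ext <;> simp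
  assoc m m' m'' := by apply Hom.ext <;> simp

@[simp] lemma id_u (x : P α β) : (𝟙 x : Hom x x).u = 𝟙 x.i := rfl
@[simp] lemma id_v (x : P α β) : (𝟙 x : Hom x x).v = 𝟙 x.j := rfl
@[simp] lemma id_w (x : P α β) : (𝟙 x : Hom x x).w = 𝟙 x.k := rfl
@[simp] lemma comp_u {x y z : P α β} (m : x ⟶ y) (m' : y ⟶ z) :
    (m ≫ m').u = Hom.u m ≫ Hom.u m' := rfl
@[simp] lemma comp_v {x y z : P α β} (m : x ⟶ y) (m' : y ⟶ z) :
    (m ≫ m').v = Hom.v m ≫ Hom.v m' := rfl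
@[simp] lemma comp_w {x y z : P α β} (m : x ⟶ y) (m' : y ⟶ z) :
    (m ≫ m').w = Hom.w m ≫ Hom.w m' := rfl

/-- Projection of `P` to `I`. -/
def projI : P α β ⥤ I where
  obj x := x.i
  map m := m.u

/-- Projection of `P` to `K`. -/
def projK : P α β ⥤ K where
  obj x := x.k
  map m := m.w

end P

variable (α : I ⥤ J) (β : J ⥤ K)

/-- The functor `Φ : P ⥤ (β ∘ α ↓ 𝟭_K)`, `(i, j, f, k, g) ↦ (i, k, g ∘ β(f))`. -/
def Phi : P α β ⥤ Comma (α ⋙ β) (𝟭 K) where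
  obj p := ⟨p.i, p.k, β.map p.f ≫ p.g⟩
  map m :=
    { left := m.u
      right := m.w
      w := by
        dsimp
        rw [← Category.assoc, ← Functor.map_comp, m.sq1, Functor.map_comp,
          Category.assoc, m.sq2, Category.assoc] }
  map_id p := by aesop_cat
  map_comp m m' := by aesop_cat

/-- The functor `Ψ : (β ∘ α ↓ 𝟭_K) ⥤ P`, `(i, k, h) ↦ (i, α(i), 𝟙, k, h)`. -/
def Psi : Comma (α ⋙ β) (𝟭 K) ⥤ P α β where
  obj x := ⟨x.left, α.obj x.left, 𝟙 _, x.right, x.hom⟩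
  map m := ⟨m.left, α.map m.left, m.right, by simp, by simpa using m.w⟩
  map_id x := by apply P.Hom.ext <;> simp
  map_comp m m' := by apply P.Hom.ext <;> simp

namespace P

variable {α : I ⥤ J} {β : J ⥤ K}

@[ext]
lemma hom_ext {x y : P α β} {m m' : x ⟶ y} (hu : m.u = m'.u) (hv : m.v = m'.v)
    (hw : m.w = m'.w) : m = m' :=
  Hom.ext hu hv hw

end P

lemma phi_obj_psi_obj (x : Comma (α ⋙ β) (𝟭 K)) : (Phi α β).obj ((Psi α β).obj x) = x := by
  cases x
  simp [Phi, Psi]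

-- The `eqToHom`s are identities only up to unfolding `Psi` and `Phi`, so `simp` cannot remove them.
theorem psi_comp_phi : Psi α β ⋙ Phi α β = 𝟭 (Comma (α ⋙ β) (𝟭 K)) :=
  CategoryTheory.Functor.ext (phi_obj_psi_obj α β) fun _ _ _ => by
    ext <;> simp only [Comma.comp_left, Comma.comp_right, Comma.eqToHom_left,
      Comma.eqToHom_right] <;> exact ((Category.id_comp _).trans (Category.comp_id _)).symm

def psiPhiUnit : 𝟭 (Comma (α ⋙ β) (𝟭 K)) ⟶ Psi α β ⋙ Phi α β where
  app x := { left := 𝟙 x.left, right := 𝟙 x.right, w := by simp [Phi, Psi] }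
  naturality _ _ _ := by ext <;> simp [Phi, Psi]

lemma psiPhiUnit_eq_eqToHom : psiPhiUnit α β = eqToHom (psi_comp_phi α β).symm := by
  ext x
  · rw [eqToHom_app, Comma.eqToHom_left]
    exact (eqToHom_refl _ _).symm
  · rw [eqToHom_app, Comma.eqToHom_right]
    exact (eqToHom_refl _ _).symm

def psiPhiCounit : Phi α β ⋙ Psi α β ⟶ 𝟭 (P α β) where
  app p := ⟨𝟙 p.i, p.f, 𝟙 p.k, by simp [Phi, Psi], by simp [Phi, Psi]⟩
  naturality p q m := by ext <;> simp [Phi, Psi, m.sq1]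

def psiPhiAdj : Psi α β ⊣ Phi α β where
  unit := psiPhiUnit α β
  counit := psiPhiCounit α β
  left_triangle_components _ := by ext <;> simp [psiPhiUnit, psiPhiCounit, Phi, Psi]
  right_triangle_components _ := by ext <;> simp [psiPhiUnit, psiPhiCounit, Phi, Psi]

/-- **Statement 9.** `Φ ∘ Ψ = 𝟭`, `Ψ` is left adjoint to `Φ` with identity unit, both
functors commute strictly with the projections to `I` and to `K`, and the components of the
counit are mapped to identities by both projections. -/
theorem psi_phi_adjunction :
    ∃ h : Psi α β ⋙ Phi α β = 𝟭 (Comma (α ⋙ β) (𝟭 K)),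
      (Phi α β ⋙ Comma.fst (α ⋙ β) (𝟭 K) = P.projI) ∧
      (Phi α β ⋙ Comma.snd (α ⋙ β) (𝟭 K) = P.projK) ∧
      (Psi α β ⋙ P.projI = Comma.fst (α ⋙ β) (𝟭 K)) ∧
      (Psi α β ⋙ P.projK = Comma.snd (α ⋙ β) (𝟭 K)) ∧
      ∃ adj : Psi α β ⊣ Phi α β,
        adj.unit = eqToHom h.symm ∧
        ∀ p : P α β, P.projI.map (adj.counit.app p) = 𝟙 p.i ∧
          P.projK.map (adj.counit.app p) = 𝟙 p.k :=
  ⟨psi_comp_phi α β, rfl, rfl, rfl, rfl, psiPhiAdj α β, psiPhiUnit_eq_eqToHom α β,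
    fun _ => ⟨rfl, rfl⟩⟩

end PaperComma9
end

section
/- Let α: J ⥤ I and β: K ⥤ J be functors between small categories. Let Q be the strict fiber product over J of the codomain projection (𝟭_I ↓ α) ⥤ J and the domain projection (𝟭_J ↓ β) ⥤ J, so that the objects of Q are tuples (i, j, f: i → α(j), k, g: j → β(k)). Define Φ: Q ⥤ (𝟭_I ↓ α ∘ β) by (i, j, f, k, g) ↦ (i, k, α(g) ∘ f) and Ψ: (𝟭_I ↓ α ∘ β) ⥤ Q by (i, k, h) ↦ (i, β(k), h, k, 𝟙_{β(k)}). Then Φ ∘ Ψ = 𝟭, Φ is left adjoint to Ψ with identity counit, both functors commute strictly with the projections of both categories to I and to K, and every component of the unit 𝟭_Q ⟹ Ψ ∘ Φ is mapped to an identity by the projections to I and to K. -/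
open CategoryTheory

universe v₁ v₂ v₃ u₁ u₂ u₃

namespace PaperComma10

variable {I : Type u₁} {J : Type u₂} {K : Type u₃}
variable [Category.{v₁} I] [Category.{v₂} J] [Category.{v₃} K]

/-- The strict fiber product over `J` of the codomain projection `(𝟭_I ↓ α) ⥤ J` and the
domain projection `(𝟭_J ↓ β) ⥤ J`; its objects are tuples
`(i, j, f : i → α(j), k, g : j → β(k))`. -/
structure Q (α : J ⥤ I) (β : K ⥤ J) : Type max u₁ u₂ u₃ v₁ v₂ where
  i : I
  j : J
  f : i ⟶ α.obj j
  k : K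
  g : j ⟶ β.obj k

namespace Q

variable {α : J ⥤ I} {β : K ⥤ J}

/-- Morphisms in `Q`: pairs of morphisms in the two comma categories agreeing on `J`. -/
@[ext]
structure Hom (x y : Q α β) : Type max v₁ v₂ v₃ where
  u : x.i ⟶ y.i
  v : x.j ⟶ y.j
  w : x.k ⟶ y.k
  sq1 : u ≫ y.f = x.f ≫ α.map v
  sq2 : v ≫ y.g = x.g ≫ β.map w

instance : Category (Q α β) where
  Hom := Hom
  id x := ⟨𝟙 _, 𝟙 _, 𝟙 _, by simp, by simp⟩
  comp m m' := ⟨m.u ≫ m'.u, m.v ≫ m'.v, m.w ≫ m'.w,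
    by rw [Category.assoc, m'.sq1, ← Category.assoc, m.sq1, Category.assoc, ← Functor.map_comp],
    by rw [Category.assoc, m'.sq2, ← Category.assoc, m.sq2, Category.assoc, ← Functor.map_comp]⟩
  id_comp m := by apply Hom.ext <;> simp
  comp_id m := by apply Hom.ext <;> simp
  assoc m m' m'' := by apply Hom.ext <;> simp

@[simp] lemma id_u (x : Q α β) : (𝟙 x : Hom x x).u = 𝟙 x.i := rfl
@[simp] lemma id_v (x : Q α β) : (𝟙 x : Hom x x).v = 𝟙 x.j := rfl
@[simp] lemma id_w (x : Q α β) : (𝟙 x : Hom x x).w = 𝟙 x.k := rfl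
@[simp] lemma comp_u {x y z : Q α β} (m : x ⟶ y) (m' : y ⟶ z) :
    (m ≫ m').u = Hom.u m ≫ Hom.u m' := rfl
@[simp] lemma comp_v {x y z : Q α β} (m : x ⟶ y) (m' : y ⟶ z) :
    (m ≫ m').v = Hom.v m ≫ Hom.v m' := rfl
@[simp] lemma comp_w {x y z : Q α β} (m : x ⟶ y) (m' : y ⟶ z) :
    (m ≫ m').w = Hom.w m ≫ Hom.w m' := rfl

/-- Projection of `Q` to `I`. -/
def projI : Q α β ⥤ I where
  obj x := x.i
  map m := m.u

/-- Projection of `Q` to `K`. -/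
def projK : Q α β ⥤ K where
  obj x := x.k
  map m := m.w

end Q

variable (α : J ⥤ I) (β : K ⥤ J)

/-- The functor `Φ : Q ⥤ (𝟭_I ↓ α ∘ β)`, `(i, j, f, k, g) ↦ (i, k, α(g) ∘ f)`. -/
def Phi : Q α β ⥤ Comma (𝟭 I) (β ⋙ α) where
  obj q := ⟨q.i, q.k, q.f ≫ α.map q.g⟩
  map m :=
    { left := m.u
      right := m.w
      w := by
        dsimp
        rw [← Category.assoc, m.sq1, Category.assoc, ← Functor.map_comp, m.sq2,
          Functor.map_comp, Category.assoc] }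
  map_id q := by aesop_cat
  map_comp m m' := by aesop_cat

/-- The functor `Ψ : (𝟭_I ↓ α ∘ β) ⥤ Q`, `(i, k, h) ↦ (i, β(k), h, k, 𝟙)`. -/
def Psi : Comma (𝟭 I) (β ⋙ α) ⥤ Q α β where
  obj x := ⟨x.left, β.obj x.right, x.hom, x.right, 𝟙 _⟩
  map m := ⟨m.left, β.map m.right, m.right, by simpa using m.w, by simp⟩
  map_id x := by apply Q.Hom.ext <;> simp
  map_comp m m' := by apply Q.Hom.ext <;> simp

/-!
The unit at `(i, j, f, k, g)` is `(𝟙 i, g, 𝟙 k) : (i, j, f, k, g) ⟶ (i, β k, α(g) ∘ f, k, 𝟙)`,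
and `Ψ ⋙ Φ` is the identity because `α(𝟙) = 𝟙`, so the counit has identity components. The
triangle identities then hold componentwise, and the unit is visibly the identity on `I` and `K`.
-/

@[ext]
lemma Q.hom_ext {x y : Q α β} {m m' : x ⟶ y} (hu : m.u = m'.u) (hv : m.v = m'.v)
    (hw : m.w = m'.w) : m = m' :=
  Q.Hom.ext hu hv hw

lemma Phi_obj_Psi_obj (x : Comma (𝟭 I) (β ⋙ α)) : (Phi α β).obj ((Psi α β).obj x) = x := by
  cases x
  simp [Phi, Psi]

theorem Psi_comp_Phi : Psi α β ⋙ Phi α β = 𝟭 (Comma (𝟭 I) (β ⋙ α)) :=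
  CategoryTheory.Functor.ext (Phi_obj_Psi_obj α β) fun x y m => by
    -- the remaining `eqToHom`s relate objects that are equal only up to unfolding `Phi` and `Psi`
    ext <;> simp only [Comma.comp_left, Comma.comp_right, Comma.eqToHom_left,
      Comma.eqToHom_right] <;> erw [eqToHom_refl, eqToHom_refl] <;> simp [Phi, Psi]

def phiPsiUnit : 𝟭 (Q α β) ⟶ Phi α β ⋙ Psi α β where
  app q := ⟨𝟙 _, q.g, 𝟙 _, by simp [Phi, Psi], by simp [Phi, Psi]⟩
  naturality x y m := by ext <;> simp [Phi, Psi, m.sq2]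

def phiPsiCounit : Psi α β ⋙ Phi α β ⟶ 𝟭 (Comma (𝟭 I) (β ⋙ α)) where
  app x := ⟨𝟙 _, 𝟙 _, by simp [Phi, Psi]⟩
  naturality x y m := by ext <;> simp [Phi, Psi]

lemma phiPsiCounit_eq_eqToHom : phiPsiCounit α β = eqToHom (Psi_comp_Phi α β) := by
  ext x <;> simp only [eqToHom_app, Comma.eqToHom_left, Comma.eqToHom_right] <;> rfl

def phiPsiAdj : Phi α β ⊣ Psi α β where
  unit := phiPsiUnit α β
  counit := phiPsiCounit α β
  left_triangle_components q := by ext <;> simp [Phi, Psi, phiPsiUnit, phiPsiCounit]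
  right_triangle_components x := by ext <;> simp [Phi, Psi, phiPsiUnit, phiPsiCounit]

/-- **Statement 10.** `Φ ∘ Ψ = 𝟭`, `Φ` is left adjoint to `Ψ` with identity counit, both
functors commute strictly with the projections to `I` and to `K`, and the components of the
unit are mapped to identities by both projections. -/
theorem phi_psi_adjunction :
    ∃ h : Psi α β ⋙ Phi α β = 𝟭 (Comma (𝟭 I) (β ⋙ α)),
      (Phi α β ⋙ Comma.fst (𝟭 I) (β ⋙ α) = Q.projI) ∧
      (Phi α β ⋙ Comma.snd (𝟭 I) (β ⋙ α) = Q.projK) ∧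
      (Psi α β ⋙ Q.projI = Comma.fst (𝟭 I) (β ⋙ α)) ∧
      (Psi α β ⋙ Q.projK = Comma.snd (𝟭 I) (β ⋙ α)) ∧
      ∃ adj : Phi α β ⊣ Psi α β,
        adj.counit = eqToHom h ∧
        ∀ q : Q α β, Q.projI.map (adj.unit.app q) = 𝟙 q.i ∧
          Q.projK.map (adj.unit.app q) = 𝟙 q.k :=
  ⟨Psi_comp_Phi α β, rfl, rfl, rfl, rfl, phiPsiAdj α β, phiPsiCounit_eq_eqToHom α β,
    fun _ => ⟨rfl, rfl⟩⟩

end PaperComma10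
end
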